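/- Let n ≥ 2 and let g_1,…,g_n be real constants. Define Q : ℝ^n × ℝ^{n−1} → ℝ by Q(x,z) = exp( Σ_{i=1}^{n−1} ( e^{z_i − x_i} + g_i e^{x_{i+1} − z_i} ) + g_n e^{−x_n − z_{n−1}} ). Then for all x ∈ ℝ^n, z ∈ ℝ^{n−1}: −(1/2) Σ_{i=1}^{n} ∂²Q/∂x_i² + [ Σ_{i=1}^{n−1} g_i e^{x_{i+1} − x_i} + g_n e^{−x_n − x_{n−1}} ] Q = −(1/2) Σ_{i=1}^{n−1} ∂²Q/∂z_i² + [ Σ_{i=1}^{n−2} g_i e^{z_{i+1} − z_i} + 2 g_{n−1} g_n e^{−2 z_{n−1}} ] Q. That is, Q intertwines the quadratic Hamiltonian −(1/2)Σ∂²_{x} + Σ_{i=1}^{n−1} g_i e^{x_{i+1}−x_i} + g_n e^{−x_n−x_{n−1}} of the D_n open Toda chain and the quadratic Hamiltonian of the C_{n−1} open Toda chain with couplings g_1,…,g_{n−2}, g_{n−1}g_n. -/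

import Mathlib

open Real

/-- Second partial derivative of `f` in the `i`-th coordinate at `x`. -/
noncomputable def pd2 {k : ℕ} (f : (Fin k → ℝ) → ℝ) (i : Fin k) (x : Fin k → ℝ) : ℝ :=
  deriv (deriv (fun t : ℝ => f (Function.update x i t))) (x i)

/-- The elementary kernel intertwining the `D_n` and `C_{n−1}` open Toda
chains (`n = m + 2 ≥ 2`):
`Q(x,z) = exp( Σ_{i=1}^{n−1} ( e^{z_i − x_i} + g_i e^{x_{i+1} − z_i} ) + g_n e^{−x_n − z_{n−1}} )`. -/
noncomputable def Qker (m : ℕ) (g : Fin (m + 2) → ℝ)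
    (x : Fin (m + 2) → ℝ) (z : Fin (m + 1) → ℝ) : ℝ :=
  Real.exp ((∑ i : Fin (m + 1), (Real.exp (z i - x i.castSucc)
        + g i.castSucc * Real.exp (x i.succ - z i)))
    + g (Fin.last (m + 1)) * Real.exp (-x (Fin.last (m + 1)) - z (Fin.last m)))

/-!
For fixed `z`, the logarithm of `Q` is a sum over the coordinates `x_j` of functions
`α_j e^{-x_j} + β_j e^{x_j}`, and likewise for fixed `x`. Hence
`∂_j² Q = ((B_j - A_j)² + (B_j + A_j)) Q`, where `A_j` (resp. `B_j`) is the sum of the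
exponential terms of `log Q` that decrease (resp. increase) in the `j`-th variable.
Each term of `log Q` occurs exactly once among the `A_j, B_j`, both for `x` and for `z`, so the
first-order parts and the squares of single terms agree on the two sides. What remains are the
products of two terms sharing a variable, and these are the Toda potentials, e.g.
`e^{z_i - x_i} · g_i e^{x_{i+1} - z_i} = g_i e^{x_{i+1} - x_i}`.
-/

theorem deriv_deriv_exp_comp {φ φ' φ'' : ℝ → ℝ} (hφ : ∀ t, HasDerivAt φ (φ' t) t)
    (hφ' : ∀ t, HasDerivAt φ' (φ'' t) t) (s : ℝ) :
    deriv (deriv fun t => exp (φ t)) s = (φ' s ^ 2 + φ'' s) * exp (φ s) := by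
  have hderiv : deriv (fun t => exp (φ t)) = fun t => exp (φ t) * φ' t :=
    funext fun t => (hφ t).exp.deriv
  rw [hderiv]
  exact ((hφ s).exp.mul (hφ' s)).deriv.trans (by ring)

theorem hasDerivAt_add_mul_exp_neg_add_mul_exp (c α β t : ℝ) :
    HasDerivAt (fun t => c + (α * exp (-t) + β * exp t)) (β * exp t - α * exp (-t)) t := by
  have hneg : HasDerivAt (fun t => exp (-t)) (-exp (-t)) t := by
    simpa using (hasDerivAt_neg t).exp
  exact (((hneg.const_mul α).add ((hasDerivAt_exp t).const_mul β)).const_add c).congr_deriv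
    (by ring)

theorem deriv_deriv_exp_add_mul_exp_neg_add_mul_exp (c α β s : ℝ) :
    deriv (deriv fun t => exp (c + (α * exp (-t) + β * exp t))) s
      = ((β * exp s - α * exp (-s)) ^ 2 + (β * exp s + α * exp (-s)))
        * exp (c + (α * exp (-s) + β * exp s)) := by
  refine deriv_deriv_exp_comp (φ'' := fun t => β * exp t + α * exp (-t))
    (hasDerivAt_add_mul_exp_neg_add_mul_exp c α β) (fun t => ?_) s
  convert hasDerivAt_add_mul_exp_neg_add_mul_exp 0 (-α) β t using 1
  · funext t
    ring
  · ring

noncomputable def expSeparable {k : ℕ} (α β : Fin k → ℝ) (y : Fin k → ℝ) : ℝ :=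
  exp (∑ j, (α j * exp (-y j) + β j * exp (y j)))

theorem expSeparable_update {k : ℕ} (α β y : Fin k → ℝ) (j : Fin k) (t : ℝ) :
    expSeparable α β (Function.update y j t)
      = exp ((∑ i ∈ Finset.univ.erase j, (α i * exp (-y i) + β i * exp (y i)))
          + (α j * exp (-t) + β j * exp t)) := by
  rw [expSeparable, ← Finset.add_sum_erase _ _ (Finset.mem_univ j), add_comm,
    Function.update_self]
  congr 2
  refine Finset.sum_congr rfl fun i hi => ?_
  rw [Function.update_of_ne (Finset.ne_of_mem_erase hi)]

theorem pd2_expSeparable {k : ℕ} (α β y : Fin k → ℝ) (j : Fin k) :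
    pd2 (expSeparable α β) j y
      = ((β j * exp (y j) - α j * exp (-y j)) ^ 2 + (β j * exp (y j) + α j * exp (-y j)))
        * expSeparable α β y := by
  rw [pd2, funext (expSeparable_update α β y j), deriv_deriv_exp_add_mul_exp_neg_add_mul_exp,
    ← expSeparable_update, Function.update_eq_self]

section SumIdentities

variable {m : ℕ} (a b : Fin (m + 1) → ℝ) (c : ℝ)

theorem sum_sq_sub_add_cons_snoc :
    ∑ j, (((Fin.cons 0 b : Fin (m + 2) → ℝ) j - (Fin.snoc a c : Fin (m + 2) → ℝ) j) ^ 2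
        + ((Fin.cons 0 b : Fin (m + 2) → ℝ) j + (Fin.snoc a c : Fin (m + 2) → ℝ) j))
      = ∑ i, (a i ^ 2 + a i) + ∑ i, (b i ^ 2 + b i) + (c ^ 2 + c)
        - 2 * (∑ i : Fin m, a i.succ * b i.castSucc + b (Fin.last m) * c) := by
  set I : Fin (m + 2) → ℝ := Fin.cons 0 b
  set D : Fin (m + 2) → ℝ := Fin.snoc a c
  have hI : ∑ j, (I j ^ 2 + I j) = ∑ i, (b i ^ 2 + b i) := by
    rw [Fin.sum_univ_succ]
    simp only [I, Fin.cons_zero, Fin.cons_succ]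
    ring
  have hD : ∑ j, (D j ^ 2 + D j) = ∑ i, (a i ^ 2 + a i) + (c ^ 2 + c) := by
    rw [Fin.sum_univ_castSucc]
    simp only [D, Fin.snoc_castSucc, Fin.snoc_last]
  have hID : ∑ j, I j * D j = ∑ i : Fin m, a i.succ * b i.castSucc + b (Fin.last m) * c := by
    rw [Fin.sum_univ_succ, Fin.sum_univ_castSucc]
    simp only [I, Fin.cons_zero, Fin.cons_succ, zero_mul, zero_add]
    simp only [D, Fin.succ_castSucc, Fin.snoc_castSucc, Fin.succ_last, Fin.snoc_last, mul_comm]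
  rw [Finset.sum_congr rfl fun j _ => show (I j - D j) ^ 2 + (I j + D j)
      = (I j ^ 2 + I j) + (D j ^ 2 + D j) - 2 * (I j * D j) by ring,
    Finset.sum_sub_distrib, Finset.sum_add_distrib, ← Finset.mul_sum, hI, hD, hID]
  ring

theorem sum_sq_sub_add_add_ite :
    ∑ j, ((a j - (b j + if j = Fin.last m then c else 0)) ^ 2
        + (a j + (b j + if j = Fin.last m then c else 0)))
      = ∑ i, (a i ^ 2 + a i) + ∑ i, (b i ^ 2 + b i) + (c ^ 2 + c) + 2 * (b (Fin.last m) * c)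
        - 2 * (∑ i, a i * b i + a (Fin.last m) * c) := by
  rw [Finset.sum_congr rfl fun j _ => show (a j - (b j + if j = Fin.last m then c else 0)) ^ 2
      + (a j + (b j + if j = Fin.last m then c else 0))
      = (a j ^ 2 + a j) + (b j ^ 2 + b j) - 2 * (a j * b j)
        + if j = Fin.last m then c ^ 2 + c + 2 * (b j * c) - 2 * (a j * c) else 0 by
    split_ifs <;> ring]
  simp only [Finset.sum_add_distrib, Finset.sum_sub_distrib, ← Finset.mul_sum,
    Finset.sum_ite_eq', Finset.mem_univ, if_true]
  ring

end SumIdentities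

namespace Qker

variable {m : ℕ} (g x : Fin (m + 2) → ℝ) (z : Fin (m + 1) → ℝ)

noncomputable def diagTerm (i : Fin (m + 1)) : ℝ := exp (z i - x i.castSucc)

noncomputable def offDiagTerm (i : Fin (m + 1)) : ℝ := g i.castSucc * exp (x i.succ - z i)

noncomputable def forkTerm : ℝ :=
  g (Fin.last (m + 1)) * exp (-x (Fin.last (m + 1)) - z (Fin.last m))

theorem eq_expSeparable_fst (u : Fin (m + 2) → ℝ) :
    Qker m g u z
      = expSeparable
          (Fin.snoc (fun i => exp (z i)) (g (Fin.last (m + 1)) * exp (-z (Fin.last m))))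
          (Fin.cons 0 fun i => g i.castSucc * exp (-z i)) u := by
  rw [Qker, expSeparable]
  congr 1
  conv_rhs => rw [Finset.sum_add_distrib, Fin.sum_univ_castSucc, Fin.sum_univ_succ (n := m + 1)]
  simp only [Fin.snoc_castSucc, Fin.snoc_last, Fin.cons_zero, Fin.cons_succ, zero_mul, zero_add,
    Finset.sum_add_distrib, sub_eq_add_neg, exp_add]
  simp only [mul_comm, mul_assoc]
  ring

theorem eq_expSeparable_snd (v : Fin (m + 1) → ℝ) :
    Qker m g x v
      = expSeparable
          (fun j => g j.castSucc * exp (x j.succ)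
            + if j = Fin.last m then g (Fin.last (m + 1)) * exp (-x (Fin.last (m + 1))) else 0)
          (fun j => exp (-x j.castSucc)) v := by
  rw [Qker, expSeparable]
  congr 1
  simp only [add_mul, ite_mul, zero_mul, Finset.sum_add_distrib, Finset.sum_ite_eq',
    Finset.mem_univ, if_true, sub_eq_add_neg, exp_add]
  simp only [mul_comm, mul_left_comm]
  ring

theorem snoc_mul_exp_neg_eq_snoc_diagTerm (j : Fin (m + 2)) :
    (Fin.snoc (fun i => exp (z i)) (g (Fin.last (m + 1)) * exp (-z (Fin.last m))) :
        Fin (m + 2) → ℝ) j * exp (-x j)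
      = (Fin.snoc (diagTerm x z) (forkTerm g x z) : Fin (m + 2) → ℝ) j := by
  induction j using Fin.lastCases with
  | last => simp only [Fin.snoc_last, forkTerm, sub_eq_add_neg, exp_add]; ring
  | cast i => simp only [Fin.snoc_castSucc, diagTerm, sub_eq_add_neg, exp_add]

theorem cons_mul_exp_eq_cons_offDiagTerm (j : Fin (m + 2)) :
    (Fin.cons 0 fun i => g i.castSucc * exp (-z i) : Fin (m + 2) → ℝ) j * exp (x j)
      = (Fin.cons 0 (offDiagTerm g x z) : Fin (m + 2) → ℝ) j := by
  induction j using Fin.cases with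
  | zero => simp only [Fin.cons_zero, zero_mul]
  | succ i => simp only [Fin.cons_succ, offDiagTerm, sub_eq_add_neg, exp_add]; ring

theorem exp_neg_mul_exp_eq_diagTerm (j : Fin (m + 1)) :
    exp (-x j.castSucc) * exp (z j) = diagTerm x z j := by
  rw [diagTerm, sub_eq_neg_add, exp_add]

theorem coeff_mul_exp_neg_eq_offDiagTerm_add_ite (j : Fin (m + 1)) :
    (g j.castSucc * exp (x j.succ)
        + if j = Fin.last m then g (Fin.last (m + 1)) * exp (-x (Fin.last (m + 1))) else 0)
        * exp (-z j)
      = offDiagTerm g x z j + if j = Fin.last m then forkTerm g x z else 0 := by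
  split_ifs with hj
  · subst hj
    simp only [offDiagTerm, forkTerm, Fin.succ_last, sub_eq_add_neg, exp_add]
    ring
  · simp only [offDiagTerm, sub_eq_add_neg, exp_add]
    ring

theorem sum_pd2_fst :
    ∑ j, pd2 (fun u => Qker m g u z) j x
      = (∑ i, (diagTerm x z i ^ 2 + diagTerm x z i)
          + ∑ i, (offDiagTerm g x z i ^ 2 + offDiagTerm g x z i)
          + (forkTerm g x z ^ 2 + forkTerm g x z)
          - 2 * (∑ i : Fin m, diagTerm x z i.succ * offDiagTerm g x z i.castSucc
            + offDiagTerm g x z (Fin.last m) * forkTerm g x z)) * Qker m g x z := by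
  simp only [eq_expSeparable_fst, pd2_expSeparable, ← Finset.sum_mul,
    cons_mul_exp_eq_cons_offDiagTerm, snoc_mul_exp_neg_eq_snoc_diagTerm, sum_sq_sub_add_cons_snoc]

theorem sum_pd2_snd :
    ∑ j, pd2 (fun v => Qker m g x v) j z
      = (∑ i, (diagTerm x z i ^ 2 + diagTerm x z i)
          + ∑ i, (offDiagTerm g x z i ^ 2 + offDiagTerm g x z i)
          + (forkTerm g x z ^ 2 + forkTerm g x z)
          + 2 * (offDiagTerm g x z (Fin.last m) * forkTerm g x z)
          - 2 * (∑ i, diagTerm x z i * offDiagTerm g x z i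
            + diagTerm x z (Fin.last m) * forkTerm g x z)) * Qker m g x z := by
  simp only [eq_expSeparable_snd, pd2_expSeparable, ← Finset.sum_mul,
    coeff_mul_exp_neg_eq_offDiagTerm_add_ite, exp_neg_mul_exp_eq_diagTerm, sum_sq_sub_add_add_ite]

theorem potential_fst_eq :
    ∑ i : Fin (m + 1), g i.castSucc * exp (x i.succ - x i.castSucc)
        + g (Fin.last (m + 1)) * exp (-x (Fin.last (m + 1)) - x (Fin.last m).castSucc)
      = ∑ i, diagTerm x z i * offDiagTerm g x z i
        + diagTerm x z (Fin.last m) * forkTerm g x z := by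
  have hpair (i : Fin (m + 1)) :
      diagTerm x z i * offDiagTerm g x z i = g i.castSucc * exp (x i.succ - x i.castSucc) := by
    rw [diagTerm, offDiagTerm, mul_left_comm, ← exp_add]
    ring_nf
  have hfork : diagTerm x z (Fin.last m) * forkTerm g x z
      = g (Fin.last (m + 1)) * exp (-x (Fin.last (m + 1)) - x (Fin.last m).castSucc) := by
    rw [diagTerm, forkTerm, mul_left_comm, ← exp_add]
    ring_nf
  simp only [hpair, hfork]

theorem potential_snd_eq :
    ∑ i : Fin m, g i.castSucc.castSucc * exp (z i.succ - z i.castSucc)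
        + 2 * (g (Fin.last m).castSucc * g (Fin.last (m + 1))) * exp (-(2 * z (Fin.last m)))
      = ∑ i : Fin m, diagTerm x z i.succ * offDiagTerm g x z i.castSucc
        + 2 * (offDiagTerm g x z (Fin.last m) * forkTerm g x z) := by
  have hpair (i : Fin m) : diagTerm x z i.succ * offDiagTerm g x z i.castSucc
      = g i.castSucc.castSucc * exp (z i.succ - z i.castSucc) := by
    rw [diagTerm, offDiagTerm, mul_left_comm, ← exp_add, Fin.succ_castSucc]
    ring_nf
  have hfork : offDiagTerm g x z (Fin.last m) * forkTerm g x z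
      = g (Fin.last m).castSucc * g (Fin.last (m + 1)) * exp (-(2 * z (Fin.last m))) := by
    rw [offDiagTerm, forkTerm, Fin.succ_last, mul_mul_mul_comm, ← exp_add]
    ring_nf
  simp only [hpair, hfork]
  ring

end Qker

/-- The kernel `Q` intertwines the quadratic Hamiltonian of the `D_n` open Toda
chain and the quadratic Hamiltonian of the `C_{n−1}` open Toda chain with
couplings `g_1, …, g_{n−2}, g_{n−1} g_n`, where `n = m + 2 ≥ 2`. -/
theorem D_C_intertwining (m : ℕ) (g : Fin (m + 2) → ℝ)
    (x : Fin (m + 2) → ℝ) (z : Fin (m + 1) → ℝ) :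
    -(1/2) * (∑ i : Fin (m + 2), pd2 (fun u => Qker m g u z) i x)
      + ((∑ i : Fin (m + 1), g i.castSucc * Real.exp (x i.succ - x i.castSucc))
          + g (Fin.last (m + 1))
              * Real.exp (-x (Fin.last (m + 1)) - x (Fin.last m).castSucc)) * Qker m g x z
    = -(1/2) * (∑ i : Fin (m + 1), pd2 (fun v => Qker m g x v) i z)
      + ((∑ i : Fin m, g i.castSucc.castSucc * Real.exp (z i.succ - z i.castSucc))
          + 2 * (g (Fin.last m).castSucc * g (Fin.last (m + 1)))
              * Real.exp (-(2 * z (Fin.last m)))) * Qker m g x z := by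
  rw [Qker.sum_pd2_fst, Qker.sum_pd2_snd, Qker.potential_fst_eq g x z,
    Qker.potential_snd_eq g x z]
  ring
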